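/- arXiv:1903.09431 — 9 statements merged into one kernel-verified Lean document; each statement's English description precedes it below -/
import Mathlib

section
/- Let p ∈ K[X] and let q ∈ K[X] be a polynomial satisfying 2q + 2X·q' + p·p' + X·p'' = 0 (primes denoting polynomial derivatives). Define K-linear endomorphisms E, H, Y of the polynomial ring K[X] by E(f) = X·f, H(f) = p·f + 2X·f', Y(f) = q·f − p·f' − X·f''. Then these endomorphisms satisfy H∘E − E∘H = 2E, H∘Y − Y∘H = −2Y, and E∘Y − Y∘E = H; equivalently, the assignment x ↦ E, h ↦ H, y ↦ Y extends to a Lie algebra homomorphism sl₂(K) → End_K(K[X]), making K[X] an sl₂(K)-module (denoted V(p)). -/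
/-!
Each relation is checked on an arbitrary polynomial `f` by expanding with the Leibniz rule.
`[H, E] = 2E` and `[E, Y] = H` are identities for every `p` and `q`; `[H, Y] + 2Y` sends `f` to
`(2q + 2Xq' + pp' + Xp'') f`, which is where the equation defining `q` enters.
-/

open Polynomial

section Sl2Relations

variable {R : Type*} [CommRing R] {p q : R[X]} {E H Y : Module.End R R[X]}

theorem sl2_relation_h_x (hE : ∀ f : R[X], E f = X * f)
    (hH : ∀ f : R[X], H f = p * f + 2 * X * derivative f) :
    H * E - E * H = 2 • E := by
  refine LinearMap.ext fun f => ?_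
  simp only [Module.End.mul_apply, LinearMap.sub_apply, LinearMap.smul_apply, hE, hH,
    derivative_mul, derivative_X]
  ring

theorem sl2_relation_h_y
    (hq : 2 * q + 2 * X * derivative q + p * derivative p + X * derivative (derivative p) = 0)
    (hH : ∀ f : R[X], H f = p * f + 2 * X * derivative f)
    (hY : ∀ f : R[X], Y f = q * f - p * derivative f - X * derivative (derivative f)) :
    H * Y - Y * H = -(2 • Y) := by
  refine LinearMap.ext fun f => ?_
  simp only [Module.End.mul_apply, LinearMap.sub_apply, LinearMap.smul_apply,
    LinearMap.neg_apply, hH, hY, derivative_mul, derivative_sub, derivative_add, derivative_X,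
    derivative_ofNat, derivative_one, derivative_zero]
  linear_combination f * hq

theorem sl2_relation_x_y (hE : ∀ f : R[X], E f = X * f)
    (hH : ∀ f : R[X], H f = p * f + 2 * X * derivative f)
    (hY : ∀ f : R[X], Y f = q * f - p * derivative f - X * derivative (derivative f)) :
    E * Y - Y * E = H := by
  refine LinearMap.ext fun f => ?_
  simp only [Module.End.mul_apply, LinearMap.sub_apply, hE, hH, hY, derivative_mul,
    derivative_add, derivative_X, derivative_one]
  ring

end Sl2Relations

theorem stmt0_general (K : Type*) [Field K]
    (p q : K[X])
    (hq : 2 * q + 2 * X * derivative q + p * derivative p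
        + X * derivative (derivative p) = 0)
    (E H Y : Module.End K K[X])
    (hE : ∀ f : K[X], E f = X * f)
    (hH : ∀ f : K[X], H f = p * f + 2 * X * derivative f)
    (hY : ∀ f : K[X], Y f = q * f - p * derivative f - X * derivative (derivative f)) :
    H * E - E * H = 2 • E ∧ H * Y - Y * H = -(2 • Y) ∧ E * Y - Y * E = H :=
  ⟨sl2_relation_h_x hE hH, sl2_relation_h_y hq hH hY,
    sl2_relation_x_y hE hH hY⟩

/-- If `q` satisfies `2q + 2X q' + p p' + X p'' = 0`, then the operators
`E f = X f`, `H f = p f + 2X f'`, `Y f = q f - p f' - X f''` on `K[X]` satisfy the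
`sl₂` commutation relations `HE - EH = 2E`, `HY - YH = -2Y`, `EY - YE = H`. -/
theorem stmt0 (K : Type*) [Field K] [IsAlgClosed K] [CharZero K]
    (p q : K[X])
    (hq : 2 * q + 2 * X * derivative q + p * derivative p
        + X * derivative (derivative p) = 0)
    (E H Y : Module.End K K[X])
    (hE : ∀ f : K[X], E f = X * f)
    (hH : ∀ f : K[X], H f = p * f + 2 * X * derivative f)
    (hY : ∀ f : K[X], Y f = q * f - p * derivative f - X * derivative (derivative f)) :
    H * E - E * H = 2 • E ∧ H * Y - Y * H = -(2 • Y) ∧ E * Y - Y * E = H :=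
  stmt0_general K p q hq E H Y hE hH hY
end

section
/- Let p, p̄ ∈ K[X]. If φ : K[X] → K[X] is a K-linear bijection which intertwines the V(p)-action with the V(p̄)-action (that is, φ∘E_p = E_{p̄}∘φ, φ∘H_p = H_{p̄}∘φ, and φ∘Y_p = Y_{p̄}∘φ), then p = p̄. Consequently V(p) ≅ V(p̄) as sl₂(K)-modules if and only if p = p̄. -/
open Polynomial

lemma aux_zero (K : Type*) [Field K] [CharZero K] (r : K[X])
    (h : 2 * r + 2 * X * derivative r = 0) : r = 0 := by
  ext n
  have h' := congrArg (fun s => coeff s n) h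
  simp only [coeff_add, coeff_zero] at h'
  rw [show (2 * X * derivative r : K[X]) = 2 * (X * derivative r) by ring] at h'
  cases n with
  | zero =>
    simp only [coeff_ofNat_mul, mul_coeff_zero, coeff_X_zero, zero_mul, mul_zero, add_zero] at h'
    simpa using h'
  | succ m =>
    simp only [coeff_ofNat_mul, coeff_X_mul, coeff_derivative] at h'
    have : (2 + 2 * ((m : K) + 1)) * r.coeff (m + 1) = 0 := by linear_combination h'
    have h2 : (2 + 2 * ((m : K) + 1)) ≠ 0 := by
      have h3 : ((2 * m + 4 : ℕ) : K) ≠ 0 := Nat.cast_ne_zero.mpr (by omega)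
      push_cast at h3
      intro hc; apply h3; linear_combination hc
    simpa [h2] using mul_eq_zero.mp this

/-- For `p, p̄ ∈ K[X]`, the modules `V(p)` and `V(p̄)` are isomorphic
(i.e. there exists a `K`-linear bijection of `K[X]` intertwining the two actions)
if and only if `p = p̄`. -/
theorem stmt1 (K : Type*) [Field K] [IsAlgClosed K] [CharZero K]
    (p pbar q qbar : K[X])
    (hq : 2 * q + 2 * X * derivative q + p * derivative p
        + X * derivative (derivative p) = 0)
    (hqbar : 2 * qbar + 2 * X * derivative qbar + pbar * derivative pbar
        + X * derivative (derivative pbar) = 0) :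
    (∃ φ : K[X] ≃ₗ[K] K[X],
      (∀ f : K[X], φ (X * f) = X * φ f) ∧
      (∀ f : K[X], φ (p * f + 2 * X * derivative f)
          = pbar * φ f + 2 * X * derivative (φ f)) ∧
      (∀ f : K[X], φ (q * f - p * derivative f - X * derivative (derivative f))
          = qbar * φ f - pbar * derivative (φ f) - X * derivative (derivative (φ f))))
    ↔ p = pbar := by
  constructor
  · rintro ⟨φ, hE, hH, -⟩
    set u : K[X] := φ 1 with hu
    have hpow : ∀ n : ℕ, φ (X ^ n) = X ^ n * u := by
      intro n
      induction n with
      | zero => simp [hu]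
      | succ m ih => rw [pow_succ, mul_comm _ X, hE, ih]; ring
    have hmul : ∀ f : K[X], φ f = f * u := by
      intro f
      induction f using Polynomial.induction_on' with
      | add a b ha hb => rw [map_add, ha, hb, add_mul]
      | monomial n a =>
        rw [← smul_X_eq_monomial, map_smul, hpow, smul_mul_assoc]
    obtain ⟨g, hg⟩ := φ.surjective 1
    rw [hmul] at hg
    have hunit : IsUnit u := IsUnit.of_mul_eq_one (a := u) g (by linear_combination hg)
    obtain ⟨c, hc, hcu⟩ := Polynomial.isUnit_iff.mp hunit
    have h1 := hH 1
    rw [hmul, hmul] at h1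
    simp only [derivative_one, mul_zero, add_zero, mul_one, one_mul, ← hcu, derivative_C] at h1
    have : p * C c = pbar * C c := by linear_combination h1
    exact mul_right_cancel₀ (C_ne_zero.mpr hc.ne_zero) this
  · intro h
    subst h
    have hqq : q = qbar := by
      have := aux_zero K (q - qbar) (by
        rw [derivative_sub]; linear_combination hq - hqbar)
      linear_combination this
    subst hqq
    exact ⟨LinearEquiv.refl K K[X], fun f => rfl, fun f => rfl, fun f => rfl⟩
end

section
/- Let ρ : sl₂(K) → End_K(K[X]) be any Lie algebra homomorphism such that ρ(x) is multiplication by X. Set p := ρ(h)(1) and q := ρ(y)(1). Then for every f ∈ K[X] one has ρ(h)(f) = p·f + 2X·f' and ρ(y)(f) = q·f − p·f' − X·f'', and moreover q satisfies 2q + 2X·q' + p·p' + X·p'' = 0. In particular, every sl₂(K)-module whose restriction to K[x]=U(span(x)) is free of rank 1 is isomorphic to V(p) for some polynomial p. -/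
open Polynomial LieAlgebra.SpecialLinear

attribute [local instance] LieRing.ofAssociativeRing

/-- The standard element `x = e₁₂` of `sl₂(K)`. -/
noncomputable def sl2x (K : Type*) [Field K] : sl (Fin 2) K :=
  single (0 : Fin 2) 1 (by decide) (1 : K)

/-- The standard element `y = e₂₁` of `sl₂(K)`. -/
noncomputable def sl2y (K : Type*) [Field K] : sl (Fin 2) K :=
  single (1 : Fin 2) 0 (by decide) (1 : K)

/-- The standard element `h = e₁₁ - e₂₂` of `sl₂(K)`. -/
noncomputable def sl2h (K : Type*) [Field K] : sl (Fin 2) K :=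
  ⟨Matrix.single 0 0 (1 : K) - Matrix.single 1 1 (1 : K), by
    show _ ∈ LinearMap.ker (Matrix.traceLinearMap (Fin 2) K K)
    rw [LinearMap.mem_ker]
    simp [Matrix.traceLinearMap]⟩

lemma bhx (K : Type*) [Field K] : ⁅sl2h K, sl2x K⁆ = (2 : K) • sl2x K := by
  apply Subtype.ext
  rw [Submodule.coe_smul_of_tower]
  show _ * _ - _ * _ = _
  ext i j
  fin_cases i <;> fin_cases j <;>
    simp [sl2h, sl2x, val_single, Matrix.mul_apply, Matrix.single_apply, Fin.sum_univ_two] <;> norm_num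

lemma bxy (K : Type*) [Field K] : ⁅sl2x K, sl2y K⁆ = sl2h K := by
  apply Subtype.ext
  show _ * _ - _ * _ = _
  ext i j
  fin_cases i <;> fin_cases j <;>
    simp [sl2h, sl2x, sl2y, val_single, Matrix.mul_apply, Matrix.single_apply, Fin.sum_univ_two]

lemma bhy (K : Type*) [Field K] : ⁅sl2h K, sl2y K⁆ = (-2 : K) • sl2y K := by
  apply Subtype.ext
  rw [Submodule.coe_smul_of_tower]
  show _ * _ - _ * _ = _
  ext i j
  fin_cases i <;> fin_cases j <;>
    simp [sl2h, sl2y, val_single, Matrix.mul_apply, Matrix.single_apply, Fin.sum_univ_two] <;> norm_num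


/-- Let `ρ : sl₂(K) → End_K(K[X])` be a Lie algebra homomorphism with
`ρ(x) f = X f`.  Set `p := ρ(h)(1)` and `q := ρ(y)(1)`.  Then `ρ(h) f = p f + 2X f'`
and `ρ(y) f = q f - p f' - X f''` for all `f`, and `2q + 2X q' + p p' + X p'' = 0`. -/
theorem stmt2 (K : Type*) [Field K] [IsAlgClosed K] [CharZero K]
    (ρ : sl (Fin 2) K →ₗ⁅K⁆ Module.End K K[X])
    (hx : ∀ f : K[X], ρ (sl2x K) f = X * f) :
    (∀ f : K[X], ρ (sl2h K) f
        = (ρ (sl2h K) 1) * f + 2 * X * derivative f) ∧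
    (∀ f : K[X], ρ (sl2y K) f
        = (ρ (sl2y K) 1) * f - (ρ (sl2h K) 1) * derivative f
          - X * derivative (derivative f)) ∧
    2 * (ρ (sl2y K) 1) + 2 * X * derivative (ρ (sl2y K) 1)
      + (ρ (sl2h K) 1) * derivative (ρ (sl2h K) 1)
      + X * derivative (derivative (ρ (sl2h K) 1)) = 0 := by
  set p := ρ (sl2h K) 1 with hp
  set q := ρ (sl2y K) 1 with hq
  -- commutation relations
  have commh : ∀ g : K[X], ρ (sl2h K) (X * g) = X * ρ (sl2h K) g + 2 * (X * g) := by
    intro g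
    have e := congrArg (fun T : Module.End K K[X] => T g) (ρ.map_lie (sl2h K) (sl2x K))
    simp only [bhx, map_smul, Ring.lie_def, LinearMap.sub_apply, Module.End.mul_apply, LinearMap.smul_apply] at e
    have e' : ρ (sl2h K) (ρ (sl2x K) g) - ρ (sl2x K) (ρ (sl2h K) g)
        = (2 : K) • ρ (sl2x K) g := e.symm
    rw [hx, hx] at e'
    have h2 : ((2 : K) • (X * g) : K[X]) = 2 * (X * g) := by
      rw [smul_eq_C_mul]; simp [map_ofNat]
    rw [h2] at e'
    linear_combination e'
  have commy : ∀ g : K[X], ρ (sl2y K) (X * g) = X * ρ (sl2y K) g - ρ (sl2h K) g := by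
    intro g
    have e := congrArg (fun T : Module.End K K[X] => T g) (ρ.map_lie (sl2x K) (sl2y K))
    simp only [bxy, Ring.lie_def, LinearMap.sub_apply, Module.End.mul_apply] at e
    have e' : ρ (sl2x K) (ρ (sl2y K) g) - ρ (sl2y K) (ρ (sl2x K) g)
        = ρ (sl2h K) g := e.symm
    rw [hx, hx] at e'
    linear_combination -e'
  -- part 1
  have part1 : ∀ f : K[X], ρ (sl2h K) f = p * f + 2 * X * derivative f := by
    intro f
    induction f using Polynomial.induction_on with
    | C a =>
        have : (C a : K[X]) = a • 1 := by rw [smul_eq_C_mul, mul_one]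
        rw [this, map_smul]
        simp only [derivative_smul]
        rw [← hp]
        simp [smul_eq_C_mul]; ring
    | add f g hf hg =>
        rw [map_add, hf, hg]; simp only [derivative_add]; ring
    | monomial n a ih =>
        have hX : (C a * X ^ (n + 1) : K[X]) = X * (C a * X ^ n) := by ring
        rw [hX, commh, ih]
        simp only [derivative_mul, derivative_X, derivative_add, derivative_one, derivative_C]
        ring
  -- part 2
  have part2 : ∀ f : K[X], ρ (sl2y K) f
      = q * f - p * derivative f - X * derivative (derivative f) := by
    intro f
    induction f using Polynomial.induction_on with
    | C a =>
        have : (C a : K[X]) = a • 1 := by rw [smul_eq_C_mul, mul_one]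
        rw [this, map_smul]
        simp only [derivative_smul]
        rw [← hq]
        simp [smul_eq_C_mul]; ring
    | add f g hf hg =>
        rw [map_add, hf, hg]; simp only [derivative_add]; ring
    | monomial n a ih =>
        have hX : (C a * X ^ (n + 1) : K[X]) = X * (C a * X ^ n) := by ring
        rw [hX, commy, ih, part1]
        simp only [derivative_mul, derivative_X, derivative_add, derivative_one, derivative_C]
        ring
  refine ⟨part1, part2, ?_⟩
  -- part 3: use ⁅h, y⁆ = -2 y applied to 1
  have e := congrArg (fun T : Module.End K K[X] => T 1) (ρ.map_lie (sl2h K) (sl2y K))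
  simp only [bhy, map_smul, Ring.lie_def, LinearMap.sub_apply, Module.End.mul_apply, LinearMap.smul_apply] at e
  have e' : ρ (sl2h K) (ρ (sl2y K) 1) - ρ (sl2y K) (ρ (sl2h K) 1)
      = (-2 : K) • ρ (sl2y K) 1 := e.symm
  rw [← hp, ← hq] at e'
  rw [part1 q, part2 p] at e'
  have h2 : ((-2 : K) • q : K[X]) = -2 * q := by
    rw [smul_eq_C_mul]; simp [map_ofNat]
  rw [h2] at e'
  linear_combination e'
end

section
/- Let p ∈ K[X]. The module V(p) is simple — that is, the only K-subspaces W ⊆ K[X] satisfying E_p(W) ⊆ W, H_p(W) ⊆ W, Y_p(W) ⊆ W are W = 0 and W = K[X] — if and only if the constant term p(0) is not of the form −m for some natural number m ∈ ℕ (i.e., −p(0) ∉ ℕ). -/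
open Polynomial

lemma X_mul_deriv_stmt3 {K : Type*} [CommRing K] (m : ℕ) :
    X * derivative ((X : K[X])^m) = C (m:K) * X^m := by
  cases m with
  | zero => simp
  | succ k => rw [derivative_X_pow]; push_cast; ring

lemma mulW_stmt3 {K : Type*} [Field K] (W : Submodule K K[X]) (hX : ∀ f ∈ W, X * f ∈ W) :
    ∀ g f, f ∈ W → g * f ∈ W := by
  intro g
  induction g using Polynomial.induction_on' with
  | add a b ha hb => intro f hf; rw [add_mul]; exact W.add_mem (ha f hf) (hb f hf)
  | monomial n a =>
    intro f hf
    have hxn : ∀ k : ℕ, X^k * f ∈ W := by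
      intro k; induction k with
      | zero => simpa using hf
      | succ k ih =>
        have := hX _ ih
        rw [pow_succ]
        simpa [mul_assoc, mul_comm, mul_left_comm] using this
    have h : (monomial n a) * f = a • (X^n * f) := by
      rw [smul_eq_C_mul, ← C_mul_X_pow_eq_monomial, mul_assoc]
    rw [h]; exact W.smul_mem a (hxn n)

lemma stmt3_mp (K : Type*) [Field K] [CharZero K] (p q : K[X]) (m : ℕ)
    (hm : p.coeff 0 = -(m : K))
    (hs : ∀ W : Submodule K K[X],
      (∀ f ∈ W, X * f ∈ W) →
      (∀ f ∈ W, p * f + 2 * X * derivative f ∈ W) →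
      (∀ f ∈ W, q * f - p * derivative f - X * derivative (derivative f) ∈ W) →
      W = ⊥ ∨ W = ⊤) : False := by
  set W : Submodule K K[X] := (Ideal.span {(X:K[X])^(m+1)}).restrictScalars K with hW
  have hmem : ∀ f : K[X], f ∈ W ↔ (X:K[X])^(m+1) ∣ f := by
    intro f
    rw [hW, Submodule.restrictScalars_mem, Ideal.mem_span_singleton]
  obtain ⟨r, hr⟩ : (X : K[X]) ∣ p + C (m:K) := by
    rw [X_dvd_iff]; simp [hm]
  have hp : p = X * r - C (m:K) := by rw [← hr]; ring
  have hderiv : ∀ g : K[X], derivative ((X:K[X])^(m+1) * g)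
      = C ((m:K)+1) * X^m * g + X^(m+1) * derivative g := by
    intro g
    rw [derivative_mul, derivative_X_pow]; push_cast; ring
  have hderiv2 : ∀ g : K[X], X * derivative (derivative ((X:K[X])^(m+1) * g))
      = C ((m:K)+1) * (C (m:K) * X^m) * g + 2 * (C ((m:K)+1) * X^(m+1) * derivative g)
        + X^(m+2) * derivative (derivative g) := by
    intro g
    rw [hderiv, derivative_add, derivative_mul, derivative_mul, derivative_mul,
      derivative_C, derivative_X_pow (m+1)]
    push_cast
    linear_combination (C ((m:K)+1) * g) * X_mul_deriv_stmt3 (K := K) m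
  have h1 : ∀ f ∈ W, X * f ∈ W := by
    intro f hf
    rw [hmem] at hf ⊢
    exact hf.mul_left X
  have h2 : ∀ f ∈ W, p * f + 2 * X * derivative f ∈ W := by
    intro f hf
    rw [hmem] at hf ⊢
    obtain ⟨g, rfl⟩ := hf
    exact ⟨p * g + 2 * X * derivative g + 2 * C ((m:K)+1) * g, by rw [hderiv]; ring⟩
  have h3 : ∀ f ∈ W, q * f - p * derivative f - X * derivative (derivative f) ∈ W := by
    intro f hf
    rw [hmem] at hf ⊢
    obtain ⟨g, rfl⟩ := hf
    refine ⟨q * g - p * derivative g - 2 * C ((m:K)+1) * derivative g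
      - X * derivative (derivative g) - C ((m:K)+1) * r * g, ?_⟩
    rw [sub_eq_iff_eq_add'] at *
    rw [hderiv2, hderiv]
    linear_combination (- C ((m:K)+1) * X^m * g) * hr
  have hXm : (X:K[X])^(m+1) ∈ W := (hmem _).2 dvd_rfl
  rcases hs W h1 h2 h3 with hbot | htop
  · rw [hbot] at hXm
    have hz : ((X:K[X])^(m+1)) = 0 := by simpa using hXm
    exact pow_ne_zero (m+1) X_ne_zero hz
  · have h1W : (1 : K[X]) ∈ W := by rw [htop]; trivial
    have : (X:K[X]) ∣ 1 := (dvd_pow_self X (Nat.succ_ne_zero m)).trans ((hmem 1).1 h1W)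
    rw [X_dvd_iff] at this
    simpa using this

lemma stmt3_mpr (K : Type*) [Field K] [CharZero K] (p q : K[X])
    (h : ∀ m : ℕ, p.coeff 0 ≠ -(m : K))
    (W : Submodule K K[X])
    (hE : ∀ f ∈ W, X * f ∈ W)
    (hH : ∀ f ∈ W, p * f + 2 * X * derivative f ∈ W)
    (hY : ∀ f ∈ W, q * f - p * derivative f - X * derivative (derivative f) ∈ W) :
    W = ⊥ ∨ W = ⊤ := by
  by_cases hbot : W = ⊥
  · exact Or.inl hbot
  right
  set I : Ideal K[X] :=
    { carrier := W
      add_mem' := fun ha hb => W.add_mem ha hb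
      zero_mem' := W.zero_mem
      smul_mem' := fun c x hx => by
        simpa [smul_eq_mul] using mulW_stmt3 W hE c x hx } with hI
  have hIW : ∀ f : K[X], f ∈ I ↔ f ∈ W := fun f => Iff.rfl
  obtain ⟨g, hg⟩ := (IsPrincipalIdealRing.principal I).principal
  have hgmem : ∀ f : K[X], f ∈ W ↔ g ∣ f := by
    intro f
    rw [← hIW, hg, Ideal.submodule_span_eq, Ideal.mem_span_singleton]
  obtain ⟨f₀, hf₀W, hf₀⟩ := Submodule.exists_mem_ne_zero_of_ne_bot hbot
  have hgne : g ≠ 0 := by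
    rintro rfl
    exact hf₀ (zero_dvd_iff.mp ((hgmem f₀).1 hf₀W))
  have hgW : g ∈ W := (hgmem g).2 dvd_rfl
  have hdvd : g ∣ X * derivative g := by
    have h1 : p * g + 2 * X * derivative g ∈ W := hH g hgW
    have h2 : g ∣ 2 * X * derivative g := by
      have := (hgmem _).1 h1
      have h3 : 2 * X * derivative g = (p * g + 2 * X * derivative g) - p * g := by ring
      rw [h3]
      exact dvd_sub this (Dvd.dvd.mul_left dvd_rfl p)
    have h4 : X * derivative g = C (2⁻¹ : K) * (2 * X * derivative g) := by
      have h5 : C (2⁻¹ : K) * 2 = 1 := by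
        rw [show ((2 : K[X]) = C (2:K)) from (map_ofNat C 2).symm, ← C_mul]
        norm_num
      calc X * derivative g = (C (2⁻¹:K) * 2) * (X * derivative g) := by rw [h5]; ring
      _ = C (2⁻¹:K) * (2 * X * derivative g) := by ring
    rw [h4]
    exact h2.mul_left _
  by_cases hdg : derivative g = 0
  · have : g.natDegree = 0 := natDegree_eq_zero_of_derivative_eq_zero hdg
    obtain ⟨a, rfl⟩ := natDegree_eq_zero.mp this
    have ha : a ≠ 0 := fun h' => hgne (by rw [h', map_zero])
    ext f
    simp only [Submodule.mem_top, iff_true]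
    rw [hgmem]
    exact (isUnit_C.mpr ha.isUnit).dvd
  exfalso
  obtain ⟨u, hu⟩ := hdvd
  have hgd : g.natDegree ≠ 0 := fun h' => hdg (by
    obtain ⟨a, rfl⟩ := natDegree_eq_zero.mp h'
    exact derivative_C)
  have hXdg : X * derivative g ≠ 0 :=
    mul_ne_zero X_ne_zero hdg
  have hun0 : u ≠ 0 := fun h' => hXdg (by rw [hu, h', mul_zero])
  have hdegu : u.natDegree = 0 := by
    have e1 : (X * derivative g).natDegree = 1 + (derivative g).natDegree := by
      rw [natDegree_mul X_ne_zero hdg, natDegree_X]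
    have e2 : (derivative g).natDegree ≤ g.natDegree - 1 := natDegree_derivative_le g
    have e3 : (X * derivative g).natDegree = g.natDegree + u.natDegree := by
      rw [hu, natDegree_mul hgne hun0]
    omega
  obtain ⟨c, rfl⟩ := natDegree_eq_zero.mp hdegu
  have hcoeff : ∀ k : ℕ, ((k : K) - c) * g.coeff k = 0 := by
    intro k
    have hk := congrArg (fun t => t.coeff k) hu
    cases k with
    | zero =>
      rw [coeff_X_mul_zero, coeff_mul_C] at hk
      push_cast
      linear_combination hk
    | succ j =>
      rw [coeff_X_mul, coeff_derivative, coeff_mul_C] at hk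
      push_cast
      linear_combination hk
  have hlc : g.coeff g.natDegree ≠ 0 := leadingCoeff_ne_zero.mpr hgne
  have hc : c = (g.natDegree : K) := by
    have h0 := hcoeff g.natDegree
    rcases mul_eq_zero.mp h0 with h' | h'
    · linear_combination -h'
    · exact absurd h' hlc
  have hgX : g = C (g.coeff g.natDegree) * X ^ g.natDegree := by
    ext k
    rw [coeff_C_mul, coeff_X_pow]
    by_cases hk : k = g.natDegree
    · simp [hk]
    · have h0 : g.coeff k = 0 := by
        have := hcoeff k
        rcases mul_eq_zero.mp this with h' | h'
        · exfalso
          rw [hc, sub_eq_zero] at h'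
          exact hk (Nat.cast_injective h')
        · exact h'
      simp [hk, h0]
  obtain ⟨j, hj⟩ : ∃ j, g.natDegree = j + 1 := ⟨g.natDegree - 1, by omega⟩
  obtain ⟨a, ha, hgX2⟩ : ∃ a : K, a ≠ 0 ∧ g = C a * X ^ (j+1) :=
    ⟨g.coeff g.natDegree, hlc, by rw [← hj]; exact hgX⟩
  have hXnW : (X : K[X]) ^ (j+1) ∈ W := by
    have e : (X : K[X]) ^ (j+1) = a⁻¹ • g := by
      rw [smul_eq_C_mul, hgX2, ← mul_assoc, ← C_mul, inv_mul_cancel₀ ha, C_1, one_mul]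
    rw [e]
    exact W.smul_mem _ hgW
  have hXng : (X:K[X])^(j+1) ∣ g := ⟨C a, by rw [hgX2]; ring⟩
  have hA : q * X^(j+1) - p * derivative ((X:K[X])^(j+1))
      - X * derivative (derivative ((X:K[X])^(j+1))) ∈ W := hY _ hXnW
  have hB : q * (X:K[X])^(j+1) ∈ W := mulW_stmt3 W hE q _ hXnW
  have hC : p * derivative ((X:K[X])^(j+1))
      + X * derivative (derivative ((X:K[X])^(j+1))) ∈ W := by
    have h6 := W.sub_mem hB hA
    have e : q * (X:K[X])^(j+1) - (q * X^(j+1) - p * derivative ((X:K[X])^(j+1))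
        - X * derivative (derivative ((X:K[X])^(j+1))))
        = p * derivative ((X:K[X])^(j+1)) + X * derivative (derivative ((X:K[X])^(j+1))) := by
      ring
    rwa [e] at h6
  have hd1 : derivative ((X:K[X])^(j+1)) = C ((j:K)+1) * X^j := by
    rw [derivative_X_pow]; push_cast; ring
  have hCeq : p * derivative ((X:K[X])^(j+1))
      + X * derivative (derivative ((X:K[X])^(j+1)))
      = C ((j:K)+1) * ((p + C (j:K)) * X^j) := by
    rw [hd1, derivative_C_mul]
    linear_combination C ((j:K)+1) * X_mul_deriv_stmt3 (K := K) j
  rw [hCeq] at hC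
  have hdvd2 : (X:K[X])^(j+1) ∣ C ((j:K)+1) * ((p + C (j:K)) * X^j) :=
    hXng.trans ((hgmem _).1 hC)
  have hj1 : ((j:K)+1) ≠ 0 := Nat.cast_add_one_ne_zero j
  have hdvd3 : (X:K[X])^(j+1) ∣ (p + C (j:K)) * X^j := by
    obtain ⟨t, ht⟩ := hdvd2
    refine ⟨C (((j:K)+1)⁻¹) * t, ?_⟩
    have e : (p + C (j:K)) * X ^ j
        = C (((j:K)+1)⁻¹) * (C ((j:K)+1) * ((p + C (j:K)) * X ^ j)) := by
      rw [← mul_assoc, ← C_mul, inv_mul_cancel₀ hj1, C_1, one_mul]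
    rw [e, ht]; ring
  have hdvd4 : (X:K[X]) ∣ p + C (j:K) := by
    have h5 : (X:K[X])^j * X ∣ X^j * (p + C (j:K)) := by
      have e : (X:K[X])^j * X = X^(j+1) := by ring
      have e2 : (X:K[X])^j * (p + C (j:K)) = (p + C (j:K)) * X^j := by ring
      rw [e, e2]; exact hdvd3
    exact (mul_dvd_mul_iff_left (pow_ne_zero j (X_ne_zero (R:=K)))).mp h5
  rw [X_dvd_iff] at hdvd4
  simp only [coeff_add, coeff_C, if_true, eq_self_iff_true] at hdvd4
  exact h j (by linear_combination hdvd4 : p.coeff 0 = -(j:K))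

/-- `V(p)` is simple (the only subspaces invariant under
`E_p, H_p, Y_p` are `0` and `K[X]`) if and only if `-p(0) ∉ ℕ`. -/
theorem stmt3 (K : Type*) [Field K] [IsAlgClosed K] [CharZero K]
    (p q : K[X])
    (hq : 2 * q + 2 * X * derivative q + p * derivative p
        + X * derivative (derivative p) = 0) :
    (∀ W : Submodule K K[X],
      (∀ f ∈ W, X * f ∈ W) →
      (∀ f ∈ W, p * f + 2 * X * derivative f ∈ W) →
      (∀ f ∈ W, q * f - p * derivative f - X * derivative (derivative f) ∈ W) →
      W = ⊥ ∨ W = ⊤)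
    ↔ ∀ m : ℕ, p.coeff 0 ≠ -(m : K) := by
  constructor
  · intro hs m hm
    exact stmt3_mp K p q m hm hs
  · intro h W hE hH hY
    exact stmt3_mpr K p q h W hE hH hY
end

section
/- Let p ∈ K[X] with p(0) = 1 − k for a positive integer k, and let p̄ := p + 2k = p − 2p(0) + 2 (a constant shift of p). Then the K-linear map φ : K[X] → K[X], φ(f) = X^k·f, intertwines the V(p̄)-action with the V(p)-action: φ∘E_{p̄} = E_p∘φ, φ∘H_{p̄} = H_p∘φ, and φ∘Y_{p̄} = Y_p∘φ. Hence the submodule X^k·K[X] of V(p) is isomorphic to V(p − 2p(0) + 2) as an sl₂(K)-module. -/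
/-!
Subtracting the defining equations of `q_p` and `q_{p̄}` shows that `X (q_{p̄} - q_p) + k p` has
zero derivative, hence equals its constant term `k p(0) = k (1 - k)`. Since
`X (X^k)' = k X^k` and `X² (X^k)'' = k (k - 1) X^k`, the relation `X^k ∘ A_{p̄} = A_p ∘ X^k`
for `A = H, Y` reduces, after multiplying by `X`, to exactly that identity.
-/

open Polynomial

namespace Polynomial

variable {R : Type*} [CommRing R]

theorem X_mul_derivative_X_pow (k : ℕ) : X * derivative (X ^ k : R[X]) = (k : R[X]) * X ^ k := by
  cases k with
  | zero => simp
  | succ k => rw [derivative_X_pow, Nat.add_sub_cancel, map_natCast, pow_succ]; ring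

theorem X_sq_mul_derivative_derivative_X_pow (k : ℕ) :
    X ^ 2 * derivative (derivative (X ^ k : R[X])) = (k : R[X]) * ((k : R[X]) - 1) * X ^ k := by
  have h := congrArg (X * derivative ·) (X_mul_derivative_X_pow (R := R) k)
  simp only [derivative_mul, derivative_X, derivative_natCast, zero_mul, zero_add, one_mul] at h
  linear_combination h + ((k : R[X]) - 1) * X_mul_derivative_X_pow (R := R) k

namespace VAction

def IsYCoeff (p q : R[X]) : Prop :=
  2 * q + 2 * X * derivative q + p * derivative p + X * derivative (derivative p) = 0

noncomputable def H (p f : R[X]) : R[X] := p * f + 2 * X * derivative f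

noncomputable def Y (p q f : R[X]) : R[X] := q * f - p * derivative f - X * derivative (derivative f)

theorem IsYCoeff.X_mul_sub_add_C_mul_eq_C [IsDomain R] [CharZero R] {p q qbar : R[X]} {c : R}
    (hq : IsYCoeff p q) (hqbar : IsYCoeff (p + C (2 * c)) qbar) :
    X * (qbar - q) + C c * p = C (c * p.coeff 0) := by
  have hderiv : derivative (X * (qbar - q) + C c * p) = 0 := by
    refine (mul_eq_zero.mp ?_).resolve_left (two_ne_zero (α := R[X]))
    unfold IsYCoeff at hq hqbar
    simp only [derivative_add, derivative_mul, derivative_X, derivative_C, derivative_sub,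
      add_zero, zero_mul, zero_add, one_mul] at hqbar ⊢
    rw [map_mul, map_ofNat] at hqbar
    linear_combination hqbar - hq
  rw [eq_C_of_derivative_eq_zero hderiv]
  simp [mul_coeff_zero]

theorem X_pow_mul_H (p : R[X]) (k : ℕ) (f : R[X]) :
    X ^ k * H (p + 2 * (k : R[X])) f = H p (X ^ k * f) := by
  rw [H, H, derivative_mul]
  linear_combination (-2 * f) * X_mul_derivative_X_pow (R := R) k

theorem X_pow_mul_Y {p q qbar : R[X]} {k : ℕ}
    (hrel : X * (qbar - q) + (k : R[X]) * p = (k * (1 - k) : R[X])) (f : R[X]) :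
    X ^ k * Y (p + 2 * (k : R[X])) qbar f = Y p q (X ^ k * f) := by
  apply isRegular_X.left
  simp only [Y, derivative_mul, derivative_add]
  linear_combination (X ^ k * f) * hrel
    + (p * f + 2 * X * derivative f) * X_mul_derivative_X_pow (R := R) k
    + f * X_sq_mul_derivative_derivative_X_pow (R := R) k

end VAction

end Polynomial

theorem stmt5_general (K : Type*) [Field K] [CharZero K]
    (p pbar q qbar : K[X])
    (hq : 2 * q + 2 * X * derivative q + p * derivative p
        + X * derivative (derivative p) = 0)
    (hqbar : 2 * qbar + 2 * X * derivative qbar + pbar * derivative pbar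
        + X * derivative (derivative pbar) = 0)
    (k : ℕ) (hp0 : p.coeff 0 = 1 - (k : K))
    (hpbar : pbar = p + C (2 * (k : K))) :
    (∀ f : K[X], X ^ k * (X * f) = X * (X ^ k * f)) ∧
    (∀ f : K[X], X ^ k * (pbar * f + 2 * X * derivative f)
        = p * (X ^ k * f) + 2 * X * derivative (X ^ k * f)) ∧
    (∀ f : K[X],
      X ^ k * (qbar * f - pbar * derivative f - X * derivative (derivative f))
        = q * (X ^ k * f) - p * derivative (X ^ k * f)
          - X * derivative (derivative (X ^ k * f))) := by
  subst hpbar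
  have hrel : X * (qbar - q) + (k : K[X]) * p = (k * (1 - k) : K[X]) := by
    simpa [hp0] using VAction.IsYCoeff.X_mul_sub_add_C_mul_eq_C hq hqbar
  have hshift : p + C (2 * (k : K)) = p + 2 * (k : K[X]) := by simp [map_ofNat]
  rw [hshift]
  exact ⟨fun f => by ring, VAction.X_pow_mul_H p k, VAction.X_pow_mul_Y hrel⟩

/-- If `p(0) = 1 - k` with `k` a positive integer, and
`p̄ = p + 2k = p - 2p(0) + 2`, then `φ(f) = X^k f` intertwines the `V(p̄)`-action
with the `V(p)`-action, so the submodule `X^k K[X] ⊆ V(p)` is isomorphic to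
`V(p - 2p(0) + 2)`. -/
theorem stmt5 (K : Type*) [Field K] [IsAlgClosed K] [CharZero K]
    (p pbar q qbar : K[X])
    (hq : 2 * q + 2 * X * derivative q + p * derivative p
        + X * derivative (derivative p) = 0)
    (hqbar : 2 * qbar + 2 * X * derivative qbar + pbar * derivative pbar
        + X * derivative (derivative pbar) = 0)
    (k : ℕ) (hk : 0 < k) (hp0 : p.coeff 0 = 1 - (k : K))
    (hpbar : pbar = p + C (2 * (k : K))) :
    (∀ f : K[X], X ^ k * (X * f) = X * (X ^ k * f)) ∧
    (∀ f : K[X], X ^ k * (pbar * f + 2 * X * derivative f)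
        = p * (X ^ k * f) + 2 * X * derivative (X ^ k * f)) ∧
    (∀ f : K[X],
      X ^ k * (qbar * f - pbar * derivative f - X * derivative (derivative f))
        = q * (X ^ k * f) - p * derivative (X ^ k * f)
          - X * derivative (derivative (X ^ k * f))) :=
  stmt5_general K p pbar q qbar hq hqbar k hp0 hpbar
end

section
/- Let p ∈ K[X] with p(0) = 1 − k for a positive integer k, and let W := X^k·K[X]. Then E_p(X^{k−1}) ∈ W and H_p(X^{k−1}) − (k−1)·X^{k−1} ∈ W, and W has codimension k in K[X]. Consequently, in the k-dimensional quotient module K[X]/W the image of X^{k−1} is a highest weight vector of weight k − 1 = −p(0), so the quotient is the simple highest weight sl₂(K)-module L(−p(0)). -/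
open Polynomial

/-- The subspace `X^k · K[X]` of `K[X]`. -/
noncomputable def Wsub (K : Type*) [Field K] (k : ℕ) : Submodule K K[X] :=
  LinearMap.range (LinearMap.mulLeft K ((X : K[X]) ^ k))

lemma wsub_compl (K : Type*) [Field K] (k : ℕ) :
    IsCompl (degreeLT K k) (Wsub K k) := by
  constructor
  · rw [disjoint_iff_inf_le]
    rintro f ⟨hf1, g, rfl⟩
    simp only [LinearMap.mulLeft_apply, SetLike.mem_coe, Polynomial.mem_degreeLT] at hf1 ⊢
    rw [Submodule.mem_bot]
    by_contra h
    have hg : g ≠ 0 := by rintro rfl; simp at h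
    rw [degree_mul, degree_X_pow] at hf1
    have h0 : (0 : WithBot ℕ) ≤ g.degree := Polynomial.zero_le_degree_iff.mpr hg
    have h1 : (k : WithBot ℕ) ≤ (k : WithBot ℕ) + g.degree := le_add_of_nonneg_right h0
    exact absurd hf1 (not_lt.mpr h1)
  · rw [codisjoint_iff, eq_top_iff]
    intro f _
    rw [Submodule.mem_sup]
    refine ⟨f %ₘ X^k, ?_, X^k * (f /ₘ X^k), ⟨f /ₘ X^k, rfl⟩, ?_⟩
    · rw [Polynomial.mem_degreeLT]
      calc (f %ₘ X^k).degree < (X^k : K[X]).degree :=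
            degree_modByMonic_lt f (monic_X_pow k)
        _ = k := degree_X_pow k
    · exact modByMonic_add_div f (X ^ k)

lemma wsub_finrank (K : Type*) [Field K] (k : ℕ) :
    Module.finrank K (K[X] ⧸ Wsub K k) = k := by
  have e := Submodule.quotientEquivOfIsCompl _ _ (wsub_compl K k).symm
  rw [e.finrank_eq]
  have e2 := Polynomial.degreeLTEquiv K k
  rw [e2.finrank_eq, Module.finrank_fin_fun]

/-- If `p(0) = 1 - k` with `k` a positive integer and `W = X^k K[X]`,
then `E_p(X^(k-1)) ∈ W`, `H_p(X^(k-1)) - (k-1)·X^(k-1) ∈ W`, and `W` has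
codimension `k` in `K[X]`; hence the image of `X^(k-1)` in the `k`-dimensional
quotient is a highest weight vector of weight `k - 1 = -p(0)`. -/
theorem stmt6 (K : Type*) [Field K] [IsAlgClosed K] [CharZero K]
    (p q : K[X])
    (hq : 2 * q + 2 * X * derivative q + p * derivative p
        + X * derivative (derivative p) = 0)
    (k : ℕ) (hk : 0 < k) (hp0 : p.coeff 0 = 1 - (k : K)) :
    X * X ^ (k - 1) ∈ Wsub K k ∧
    (p * X ^ (k - 1) + 2 * X * derivative ((X : K[X]) ^ (k - 1)))
        - ((k : K) - 1) • X ^ (k - 1) ∈ Wsub K k ∧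
    Module.finrank K (K[X] ⧸ Wsub K k) = k ∧
    ((k : K) - 1 = -(p.coeff 0)) := by
  obtain ⟨m, rfl⟩ : ∃ m, k = m + 1 := ⟨k - 1, (Nat.succ_pred_eq_of_pos hk).symm⟩
  simp only [Nat.add_sub_cancel] at *
  refine ⟨⟨1, by simp [pow_succ, mul_comm]⟩, ⟨p.divX, ?_⟩, wsub_finrank K _,
    by rw [hp0]; push_cast; ring⟩
  simp only [LinearMap.mulLeft_apply]
  set d := p.divX with hdd
  have hp : X * d + C (p.coeff 0) = p := X_mul_divX_add p
  rw [Polynomial.smul_eq_C_mul, ← hp, hp0]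
  rcases m with _ | n
  · simp
  · rw [derivative_X_pow]
    simp only [Nat.add_sub_cancel, map_sub, map_one, map_natCast]
    push_cast
    ring
end

section
/- Let p ∈ K[X] with p(0) ≠ 1. Consider on K[X] × K[X] the operators Ẽ(f,g) = (X·f + g, X·g), H̃(f,g) = ((p+1)·f + 2X·f', (p−1)·g + 2X·g'), Ỹ(f,g) = (q_p·f − p·f' − X·f'', q_p·g − p·g' − X·g'' + f), which realize the tensor product module V(p) ⊗ L(1) of V(p) with the 2-dimensional natural sl₂(K)-module L(1). Then there exists a K-linear bijection Φ : K[X] × K[X] → K[X] × K[X] intertwining this action with the direct sum of the V(p−1)-action and the V(p+1)-action (componentwise E_{p−1} ⊕ E_{p+1}, H_{p−1} ⊕ H_{p+1}, Y_{p−1} ⊕ Y_{p+1}). Hence V(p) ⊗ L(1) ≅ V(p−1) ⊕ V(p+1) as sl₂(K)-modules. -/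
/-!
Write `p = X U + c` with `c = p(0)`. The equation defining `q_p` integrates to the closed form
`4 q_p = -X U² - 2 c U - 2 X U'`, so `q_{p∓1} = q_p ± U / 2`. The map
`(f, g) ↦ ((2c - 2) g - X w, w)` with `w = 2f - U g - 2g'` then intertwines the two actions by
direct polynomial identities; it is invertible because its image `(a, w)` satisfies
`a + X w = (2c - 2) g`, which recovers `g`, and then `f`, as long as `c ≠ 1`.
-/

open Polynomial

theorem Polynomial.divX_sub_one {R : Type*} [Ring R] (p : R[X]) : (p - 1).divX = p.divX := by
  rw [sub_eq_add_neg, divX_add, ← C_1, ← C_neg, divX_C, add_zero]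

section Intertwiner

variable {K : Type*} [Field K]

noncomputable def tensorOneDecomp (c : K) (U : K[X]) : (K[X] × K[X]) →ₗ[K] (K[X] × K[X]) where
  toFun v := ((2 * C c - 2) * v.2 - X * (2 * v.1 - U * v.2 - 2 * derivative v.2),
      2 * v.1 - U * v.2 - 2 * derivative v.2)
  map_add' a b := by
    simp only [Prod.fst_add, Prod.snd_add, derivative_add, Prod.mk_add_mk, Prod.mk.injEq]
    constructor <;> ring
  map_smul' m a := by
    simp only [Prod.smul_fst, Prod.smul_snd, RingHom.id_apply, Prod.smul_mk,
      smul_eq_C_mul, derivative_C_mul, Prod.mk.injEq]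
    constructor <;> ring

theorem tensorOneDecomp_apply (c : K) (U : K[X]) (v : K[X] × K[X]) :
    tensorOneDecomp c U v = ((2 * C c - 2) * v.2 - X * (2 * v.1 - U * v.2 - 2 * derivative v.2),
      2 * v.1 - U * v.2 - 2 * derivative v.2) := rfl

theorem tensorOneDecomp_E (c : K) (U f g : K[X]) :
    tensorOneDecomp c U (X * f + g, X * g) =
      (X * (tensorOneDecomp c U (f, g)).1, X * (tensorOneDecomp c U (f, g)).2) := by
  simp only [tensorOneDecomp_apply, derivative_mul, derivative_X, one_mul, Prod.mk.injEq]
  constructor <;> ring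

theorem tensorOneDecomp_H (c : K) (U f g : K[X]) :
    let p := X * U + C c
    tensorOneDecomp c U ((p + 1) * f + 2 * X * derivative f, (p - 1) * g + 2 * X * derivative g)
      = ((p - 1) * (tensorOneDecomp c U (f, g)).1
            + 2 * X * derivative (tensorOneDecomp c U (f, g)).1,
         (p + 1) * (tensorOneDecomp c U (f, g)).2
            + 2 * X * derivative (tensorOneDecomp c U (f, g)).2) := by
  simp only [tensorOneDecomp_apply, derivative_mul, derivative_add, derivative_sub,
    derivative_one, derivative_X, derivative_C, derivative_ofNat, one_mul, zero_mul, zero_add,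
    add_zero, mul_zero, Prod.mk.injEq]
  constructor <;> ring

noncomputable def tensorOneDecompInv (c : K) (U : K[X]) :
    (K[X] × K[X]) →ₗ[K] (K[X] × K[X]) where
  toFun v :=
    let g := C (2 * c - 2)⁻¹ * (v.1 + X * v.2)
    (C 2⁻¹ * (v.2 + U * g) + derivative g, g)
  map_add' a b := by
    simp only [Prod.fst_add, Prod.snd_add, derivative_mul, derivative_add, derivative_C,
      derivative_X, Prod.mk_add_mk, Prod.mk.injEq]
    constructor <;> ring
  map_smul' m a := by
    simp only [Prod.smul_fst, Prod.smul_snd, RingHom.id_apply, Prod.smul_mk, smul_eq_C_mul,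
      derivative_mul, derivative_add, derivative_C, derivative_X, Prod.mk.injEq]
    constructor <;> ring

theorem tensorOneDecompInv_apply (c : K) (U : K[X]) (v : K[X] × K[X]) :
    tensorOneDecompInv c U v =
      (C 2⁻¹ * (v.2 + U * (C (2 * c - 2)⁻¹ * (v.1 + X * v.2)))
          + derivative (C (2 * c - 2)⁻¹ * (v.1 + X * v.2)),
        C (2 * c - 2)⁻¹ * (v.1 + X * v.2)) := rfl

end Intertwiner

section CharZero

variable {K : Type*} [Field K] [CharZero K]

/-- The defining equation of `q_p` says that `2Xq + p²/2 + Xp' - p` is constant. -/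
theorem four_mul_eq_of_ode {p q : K[X]}
    (hq : 2 * q + 2 * X * derivative q + p * derivative p + X * derivative (derivative p) = 0) :
    4 * q = -(X * p.divX ^ 2) - 2 * C (p.coeff 0) * p.divX - 2 * X * derivative p.divX := by
  set U := p.divX
  set c := p.coeff 0
  have hp : p = X * U + C c := (X_mul_divX_add p).symm
  clear_value U c
  subst hp
  set F := 4 * q + X * U ^ 2 + 2 * C c * U + 2 * X * derivative U
  have hF : derivative (X * F) = 0 := by
    simp only [F, derivative_mul, derivative_add, derivative_X, derivative_C, derivative_pow,
      derivative_ofNat, one_mul, mul_one, zero_mul, zero_add, add_zero, mul_zero,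
      Nat.cast_ofNat, map_ofNat] at hq ⊢
    linear_combination 2 * hq
  have hXF : X * F = 0 := by
    rw [eq_C_of_derivative_eq_zero hF, mul_coeff_zero, coeff_X_zero, zero_mul, C_0]
  linear_combination (mul_eq_zero.mp hXF).resolve_left X_ne_zero

theorem tensorOneDecomp_Y (c : K) {U q qm qpl : K[X]}
    (hq : 4 * q = -(X * U ^ 2) - 2 * C c * U - 2 * X * derivative U)
    (hqm : 4 * qm = -(X * U ^ 2) - 2 * C (c - 1) * U - 2 * X * derivative U)
    (hqpl : 4 * qpl = -(X * U ^ 2) - 2 * C (c + 1) * U - 2 * X * derivative U) (f g : K[X]) :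
    let p := X * U + C c
    tensorOneDecomp c U (q * f - p * derivative f - X * derivative (derivative f),
        q * g - p * derivative g - X * derivative (derivative g) + f)
      = (qm * (tensorOneDecomp c U (f, g)).1 - (p - 1) * derivative (tensorOneDecomp c U (f, g)).1
            - X * derivative (derivative (tensorOneDecomp c U (f, g)).1),
         qpl * (tensorOneDecomp c U (f, g)).2 - (p + 1) * derivative (tensorOneDecomp c U (f, g)).2
            - X * derivative (derivative (tensorOneDecomp c U (f, g)).2)) := by
  have hq' : 4 * derivative q = -(U ^ 2) - 2 * X * U * derivative U - 2 * C c * derivative U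
      - 2 * derivative U - 2 * X * derivative (derivative U) := by
    have h := congrArg derivative hq
    simp only [derivative_mul, derivative_sub, derivative_neg, derivative_X, derivative_C,
      derivative_pow, derivative_ofNat, one_mul, mul_one, zero_mul, zero_add, Nat.cast_ofNat,
      map_ofNat] at h
    linear_combination h
  simp only [map_sub, map_add, map_one] at hqm hqpl
  simp only [tensorOneDecomp_apply, derivative_mul, derivative_add, derivative_sub,
    derivative_X, derivative_C, derivative_ofNat, one_mul, zero_mul, zero_add, add_zero,
    mul_zero, Prod.mk.injEq]
  constructor
  · apply mul_left_cancel₀ (by norm_num : (4 : K[X]) ≠ 0)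
    linear_combination ((2 * C c - 2) * g - 2 * X * f + X * U * g + 2 * X * derivative g) * hq
      + (2 * X * g) * hq' - ((2 * C c - 2) * g - X * (2 * f - U * g - 2 * derivative g)) * hqm
  · apply mul_left_cancel₀ (by norm_num : (4 : K[X]) ≠ 0)
    linear_combination (2 * f - U * g - 2 * derivative g) * (hq - hqpl) - (2 * g) * hq'

theorem C_inv_mul_two_mul_C_sub_two {c : K} (hc : c ≠ 1) :
    C (2 * c - 2)⁻¹ * (2 * C c - 2) = 1 := by
  have hc' : 2 * c - 2 ≠ 0 := by contrapose! hc; linear_combination hc / 2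
  rw [← C_ofNat, ← C_mul, ← C_sub, ← C_mul, inv_mul_cancel₀ hc', C_1]

theorem tensorOneDecomp_comp_inv {c : K} (hc : c ≠ 1) (U : K[X]) :
    tensorOneDecomp c U ∘ₗ tensorOneDecompInv c U = LinearMap.id := by
  have hk := C_inv_mul_two_mul_C_sub_two hc
  have h2 : C (2 : K)⁻¹ * 2 = 1 := by rw [← C_ofNat, ← C_mul, inv_mul_cancel₀ two_ne_zero, C_1]
  refine LinearMap.ext fun ⟨a, b⟩ => ?_
  simp only [LinearMap.comp_apply, LinearMap.id_apply, tensorOneDecomp_apply,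
    tensorOneDecompInv_apply, derivative_mul, derivative_add, derivative_C, derivative_X,
    zero_mul, zero_add, one_mul, Prod.mk.injEq]
  constructor
  · linear_combination (a + X * b) * hk
      - (X * (b + U * (C (2 * c - 2)⁻¹ * (a + X * b)))) * h2
  · linear_combination (b + U * (C (2 * c - 2)⁻¹ * (a + X * b))) * h2

theorem tensorOneDecompInv_comp {c : K} (hc : c ≠ 1) (U : K[X]) :
    tensorOneDecompInv c U ∘ₗ tensorOneDecomp c U = LinearMap.id := by
  have hk := C_inv_mul_two_mul_C_sub_two hc
  have h2 : C (2 : K)⁻¹ * 2 = 1 := by rw [← C_ofNat, ← C_mul, inv_mul_cancel₀ two_ne_zero, C_1]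
  refine LinearMap.ext fun ⟨f, g⟩ => ?_
  simp only [LinearMap.comp_apply, LinearMap.id_apply, tensorOneDecomp_apply,
    tensorOneDecompInv_apply, derivative_mul, derivative_add, derivative_sub, derivative_C,
    derivative_X, derivative_ofNat, zero_mul, zero_add, one_mul, mul_zero, add_zero,
    Prod.mk.injEq]
  constructor
  · linear_combination (f - derivative g) * h2 + (C (2 : K)⁻¹ * U * g + derivative g) * hk
  · linear_combination g * hk

end CharZero

theorem stmt7_general (K : Type*) [Field K] [CharZero K]
    (p q qm qpl : K[X])
    (hq : 2 * q + 2 * X * derivative q + p * derivative p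
        + X * derivative (derivative p) = 0)
    (hqm : 2 * qm + 2 * X * derivative qm + (p - 1) * derivative (p - 1)
        + X * derivative (derivative (p - 1)) = 0)
    (hqpl : 2 * qpl + 2 * X * derivative qpl + (p + 1) * derivative (p + 1)
        + X * derivative (derivative (p + 1)) = 0)
    (hp0 : p.coeff 0 ≠ 1) :
    ∃ Φ : (K[X] × K[X]) ≃ₗ[K] (K[X] × K[X]),
      (∀ f g : K[X],
        Φ (X * f + g, X * g) = (X * (Φ (f, g)).1, X * (Φ (f, g)).2)) ∧
      (∀ f g : K[X],
        Φ ((p + 1) * f + 2 * X * derivative f, (p - 1) * g + 2 * X * derivative g)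
          = ((p - 1) * (Φ (f, g)).1 + 2 * X * derivative (Φ (f, g)).1,
             (p + 1) * (Φ (f, g)).2 + 2 * X * derivative (Φ (f, g)).2)) ∧
      (∀ f g : K[X],
        Φ (q * f - p * derivative f - X * derivative (derivative f),
           q * g - p * derivative g - X * derivative (derivative g) + f)
          = (qm * (Φ (f, g)).1 - (p - 1) * derivative (Φ (f, g)).1
               - X * derivative (derivative (Φ (f, g)).1),
             qpl * (Φ (f, g)).2 - (p + 1) * derivative (Φ (f, g)).2
               - X * derivative (derivative (Φ (f, g)).2))) := by
  have h4q := four_mul_eq_of_ode hq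
  have h4qm := four_mul_eq_of_ode hqm
  have h4qpl := four_mul_eq_of_ode hqpl
  rw [divX_sub_one, coeff_sub, coeff_one_zero] at h4qm
  rw [divX_add, divX_one, add_zero, coeff_add, coeff_one_zero] at h4qpl
  have hp := (X_mul_divX_add p).symm
  generalize p.divX = U at *
  generalize p.coeff 0 = c at *
  subst hp
  exact ⟨.ofLinearMap _ _ (tensorOneDecomp_comp_inv hp0 U) (tensorOneDecompInv_comp hp0 U),
    tensorOneDecomp_E c U, tensorOneDecomp_H c U, tensorOneDecomp_Y c h4q h4qm h4qpl⟩

/-- For `p(0) ≠ 1`, the module `V(p) ⊗ L(1)`, realized on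
`K[X] × K[X]` via `Ẽ(f,g) = (Xf + g, Xg)`, `H̃(f,g) = ((p+1)f + 2Xf', (p-1)g + 2Xg')`,
`Ỹ(f,g) = (q f - p f' - X f'', q g - p g' - X g'' + f)`, is isomorphic to
`V(p-1) ⊕ V(p+1)`: there is a linear bijection intertwining the above action with
the componentwise `V(p-1)`- and `V(p+1)`-actions. -/
theorem stmt7 (K : Type*) [Field K] [IsAlgClosed K] [CharZero K]
    (p q qm qpl : K[X])
    (hq : 2 * q + 2 * X * derivative q + p * derivative p
        + X * derivative (derivative p) = 0)
    (hqm : 2 * qm + 2 * X * derivative qm + (p - 1) * derivative (p - 1)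
        + X * derivative (derivative (p - 1)) = 0)
    (hqpl : 2 * qpl + 2 * X * derivative qpl + (p + 1) * derivative (p + 1)
        + X * derivative (derivative (p + 1)) = 0)
    (hp0 : p.coeff 0 ≠ 1) :
    ∃ Φ : (K[X] × K[X]) ≃ₗ[K] (K[X] × K[X]),
      (∀ f g : K[X],
        Φ (X * f + g, X * g) = (X * (Φ (f, g)).1, X * (Φ (f, g)).2)) ∧
      (∀ f g : K[X],
        Φ ((p + 1) * f + 2 * X * derivative f, (p - 1) * g + 2 * X * derivative g)
          = ((p - 1) * (Φ (f, g)).1 + 2 * X * derivative (Φ (f, g)).1,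
             (p + 1) * (Φ (f, g)).2 + 2 * X * derivative (Φ (f, g)).2)) ∧
      (∀ f g : K[X],
        Φ (q * f - p * derivative f - X * derivative (derivative f),
           q * g - p * derivative g - X * derivative (derivative g) + f)
          = (qm * (Φ (f, g)).1 - (p - 1) * derivative (Φ (f, g)).1
               - X * derivative (derivative (Φ (f, g)).1),
             qpl * (Φ (f, g)).2 - (p + 1) * derivative (Φ (f, g)).2
               - X * derivative (derivative (Φ (f, g)).2))) :=
  stmt7_general K p q qm qpl hq hqm hqpl hp0
end

section
/- Let ρ : sl_{n+1}(K) → End_K(K[x_1,…,x_n]) be any Lie algebra homomorphism such that ρ(e_{i,n+1}) is multiplication by x_i for every 1 ≤ i ≤ n. Define p_{ij} := ρ(e_{ij})(1) for 1 ≤ i ≠ j ≤ n, p_{ii} := ρ(h_i)(1), and q_i := ρ(e_{n+1,i})(1). Then for every f ∈ K[x_1,…,x_n]: ρ(h_i)(f) = p_{ii}·f + x_i·f^i; ρ(e_{ij})(f) = p_{ij}·f + x_i·f^j for i ≠ j; and ρ(e_{n+1,i})(f) = q_i·f − Σ_{r=1}^n (p_{ri}·f^r + p_{rr}·f^i + x_r·f^{ir}).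 In particular the module structure is uniquely determined by the polynomials p_{ij} and q_i. -/
open LieAlgebra.SpecialLinear Matrix

/-- The matrix unit `e_{ab}` (for `a ≠ b`) as an element of `sl_N(K)`. -/
noncomputable def eE {K : Type*} [Field K] {N : ℕ} (a b : Fin N) (hab : a ≠ b) :
    sl (Fin N) K := LieAlgebra.SpecialLinear.single a b hab (1 : K)

/-- The element `h_i = e_{ii} - (1/(n+1))·I` of `sl_{n+1}(K)` (indices `1 ≤ i ≤ n`). -/
noncomputable def hE {K : Type*} [Field K] [CharZero K] {n : ℕ} (i : Fin n) :
    sl (Fin (n + 1)) K :=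
  ⟨Matrix.single i.castSucc i.castSucc (1 : K) - ((n + 1 : K))⁻¹ • 1, by
    show _ ∈ LinearMap.ker (Matrix.traceLinearMap (Fin (n + 1)) K K)
    rw [LinearMap.mem_ker, map_sub]
    have h1 : (Matrix.traceLinearMap (Fin (n + 1)) K K)
        (Matrix.single i.castSucc i.castSucc (1 : K)) = 1 := by
      simp [Matrix.traceLinearMap, Matrix.trace, Matrix.diag, Matrix.single,
        Finset.sum_ite_eq]
    have h2 : (Matrix.traceLinearMap (Fin (n + 1)) K K)
        (((n + 1 : K))⁻¹ • (1 : Matrix (Fin (n + 1)) (Fin (n + 1)) K)) = 1 := by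
      rw [_root_.map_smul]
      simp only [Matrix.traceLinearMap_apply, Matrix.trace_one, Fintype.card_fin,
        smul_eq_mul]
      push_cast
      exact inv_mul_cancel₀ (Nat.cast_add_one_ne_zero n)
    rw [h1, h2, sub_self]⟩

/-- The element `e_{i,n+1}` of `sl_{n+1}(K)` (denoted `x_i`), for `1 ≤ i ≤ n`. -/
noncomputable def xg {K : Type*} [Field K] {n : ℕ} (i : Fin n) : sl (Fin (n + 1)) K :=
  eE i.castSucc (Fin.last n) (Fin.castSucc_lt_last i).ne

/-- The element `e_{ij}` of `sl_{n+1}(K)` for `1 ≤ i ≠ j ≤ n`. -/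
noncomputable def eg {K : Type*} [Field K] {n : ℕ} (i j : Fin n) (hij : i ≠ j) :
    sl (Fin (n + 1)) K :=
  eE i.castSucc j.castSucc (by simpa [Fin.ext_iff] using hij)

/-- The element `e_{n+1,i}` of `sl_{n+1}(K)` for `1 ≤ i ≤ n`. -/
noncomputable def fg {K : Type*} [Field K] {n : ℕ} (i : Fin n) : sl (Fin (n + 1)) K :=
  eE (Fin.last n) i.castSucc (Fin.castSucc_lt_last i).ne'

/-- The element `h̄ = h_1 + ⋯ + h_n` of `sl_{n+1}(K)`. -/
noncomputable def hbar (K : Type*) [Field K] [CharZero K] (n : ℕ) :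
    sl (Fin (n + 1)) K := ∑ i : Fin n, hE i

set_option linter.unusedSectionVars false

section Brackets
variable {K : Type*} [Field K] [CharZero K] {n : ℕ}

lemma xg_val (i : Fin n) :
    (xg (K := K) i).val = Matrix.single i.castSucc (Fin.last n) (1 : K) := rfl

lemma hE_val (i : Fin n) :
    (hE (K := K) i).val =
      Matrix.single i.castSucc i.castSucc (1 : K) - ((n + 1 : K))⁻¹ • 1 := rfl

lemma eg_val (i j : Fin n) (hij : i ≠ j) :
    (eg (K := K) i j hij).val = Matrix.single i.castSucc j.castSucc (1 : K) := rfl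

lemma fg_val (i : Fin n) :
    (fg (K := K) i).val = Matrix.single (Fin.last n) i.castSucc (1 : K) := rfl

lemma br1 (i j : Fin n) :
    ⁅hE (K := K) i, xg (K := K) j⁆ = if i = j then xg (K := K) j else 0 := by
  have hne : Fin.last n ≠ (i : Fin n).castSucc := (Fin.castSucc_lt_last i).ne'
  apply Subtype.ext
  rw [sl_bracket, apply_ite Subtype.val, hE_val, xg_val]
  by_cases h : i = j
  · subst h
    rw [if_pos rfl]
    simp [sub_mul, mul_sub, smul_mul_assoc, mul_smul_comm, hne]
  · have hne2 : i.castSucc ≠ j.castSucc := fun e => h (Fin.castSucc_inj.mp e)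
    rw [if_neg h]
    simp [sub_mul, mul_sub, smul_mul_assoc, mul_smul_comm, hne, hne2]

lemma br2 (i j k : Fin n) (hij : i ≠ j) :
    ⁅eg (K := K) i j hij, xg (K := K) k⁆ = if j = k then xg (K := K) i else 0 := by
  have hne : Fin.last n ≠ (i : Fin n).castSucc := (Fin.castSucc_lt_last i).ne'
  apply Subtype.ext
  rw [sl_bracket, apply_ite Subtype.val, eg_val, xg_val]
  by_cases h : j = k
  · subst h
    rw [if_pos rfl]
    simp [hne, xg_val]
  · have hne2 : j.castSucc ≠ k.castSucc := fun e => h (Fin.castSucc_inj.mp e)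
    rw [if_neg h]
    simp [hne, hne2]

lemma sum_diag :
    ∑ r : Fin n, Matrix.single (r.castSucc) (r.castSucc) (1 : K)
      = (1 : Matrix (Fin (n + 1)) (Fin (n + 1)) K)
        - Matrix.single (Fin.last n) (Fin.last n) 1 := by
  have h : ∑ r : Fin (n + 1), Matrix.single r r (1 : K) = 1 := by
    ext a b
    simp [Matrix.sum_apply, Matrix.single, Matrix.one_apply, ite_and]
  rw [Fin.sum_univ_castSucc] at h
  exact eq_sub_of_add_eq h

lemma hbar_val :
    (hbar K n).val = (1 : Matrix (Fin (n + 1)) (Fin (n + 1)) K)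
      - Matrix.single (Fin.last n) (Fin.last n) 1
      - (n : ℕ) • (((n + 1 : K))⁻¹ • (1 : Matrix (Fin (n + 1)) (Fin (n + 1)) K)) := by
  have h : (hbar K n).val = ∑ r : Fin n, (hE (K := K) r).val := by
    simp [hbar]
  rw [h]
  simp only [hE_val]
  rw [Finset.sum_sub_distrib, sum_diag, Finset.sum_const, Finset.card_univ, Fintype.card_fin]

lemma br3a (i : Fin n) :
    ⁅fg (K := K) i, xg (K := K) i⁆ = -(hbar K n + hE (K := K) i) := by
  apply Subtype.ext
  rw [sl_bracket, fg_val, xg_val]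
  have hval : (-(hbar K n + hE (K := K) i)).val = -((hbar K n).val + (hE (K := K) i).val) := rfl
  rw [hval, hbar_val, hE_val,
    Matrix.single_mul_single_same, Matrix.single_mul_single_same]
  have hc : (n : ℕ) • (((n + 1 : K))⁻¹ • (1 : Matrix (Fin (n + 1)) (Fin (n + 1)) K))
      + ((n + 1 : K))⁻¹ • (1 : Matrix (Fin (n + 1)) (Fin (n + 1)) K) = 1 := by
    rw [← Nat.cast_smul_eq_nsmul K, smul_smul, ← add_smul]
    have h2 : (n : K) * ((n + 1 : K))⁻¹ + ((n + 1 : K))⁻¹ = 1 := by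
      have h1 : ((n : K) + 1) ≠ 0 := Nat.cast_add_one_ne_zero n
      field_simp
    rw [h2, one_smul]
  rw [one_mul]
  calc Matrix.single (Fin.last n) (Fin.last n) (1:K)
        - Matrix.single i.castSucc i.castSucc 1
      = ((n : ℕ) • (((n + 1 : K))⁻¹ • (1 : Matrix (Fin (n + 1)) (Fin (n + 1)) K))
          + ((n + 1 : K))⁻¹ • 1) - 1
        + (Matrix.single (Fin.last n) (Fin.last n) (1:K)
          - Matrix.single i.castSucc i.castSucc 1) := by rw [hc]; abel
    _ = _ := by abel

lemma br3b (i j : Fin n) (h : i ≠ j) :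
    ⁅fg (K := K) i, xg (K := K) j⁆ = -(eg (K := K) j i h.symm) := by
  have hne2 : i.castSucc ≠ j.castSucc := fun e => h (Fin.castSucc_inj.mp e)
  apply Subtype.ext
  rw [sl_bracket, fg_val, xg_val]
  have hval : (-(eg (K := K) j i h.symm)).val = -((eg (K := K) j i h.symm).val) := rfl
  rw [hval, eg_val]
  simp [hne2]

end Brackets

section Analytic
open MvPolynomial
variable {K : Type*} [CommRing K] {n : ℕ}

lemma hder (r j : Fin n) (p : MvPolynomial (Fin n) K) :
    pderiv r (X j * p) = (if r = j then p else 0) + X j * pderiv r p := by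
  rw [pderiv_mul]
  by_cases h : r = j
  · subst h; simp
  · simp [pderiv_X_of_ne (Ne.symm h), h]

lemma sumS (i j : Fin n) (P Q : Fin n → MvPolynomial (Fin n) K) (p : MvPolynomial (Fin n) K) :
    ∑ r : Fin n, (P r * pderiv r (X j * p) + Q r * pderiv i (X j * p)
        + X r * pderiv i (pderiv r (X j * p)))
      = X j * (∑ r : Fin n, (P r * pderiv r p + Q r * pderiv i p
          + X r * pderiv i (pderiv r p)))
        + (P j * p + X j * pderiv i p)
        + (if i = j then ((∑ r : Fin n, Q r * p) + ∑ r : Fin n, X r * pderiv r p) else 0) := by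
  have key : ∀ r : Fin n, P r * pderiv r (X j * p) + Q r * pderiv i (X j * p)
        + X r * pderiv i (pderiv r (X j * p))
      = X j * (P r * pderiv r p + Q r * pderiv i p + X r * pderiv i (pderiv r p))
        + (if r = j then P r * p + X r * pderiv i p else 0)
        + (if i = j then Q r * p + X r * pderiv r p else 0) := by
    intro r
    have h2 : pderiv i (pderiv r (X j * p))
        = (if r = j then pderiv i p else 0)
          + ((if i = j then pderiv r p else 0) + X j * pderiv i (pderiv r p)) := by
      rw [hder r j p, map_add, hder i j (pderiv r p)]
      congr 1
      split_ifs with h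
      · rfl
      · exact map_zero _
    rw [h2, hder r j p, hder i j p]
    split_ifs with h1 h2 <;> ring
  rw [Finset.sum_congr rfl (fun r _ => key r), Finset.sum_add_distrib, Finset.sum_add_distrib,
    ← Finset.mul_sum]
  congr 1
  · congr 1
    rw [Finset.sum_ite_eq' Finset.univ j (fun r => P r * p + X r * pderiv i p)]
    simp
  · split_ifs with h
    · rw [Finset.sum_add_distrib]
    · simp

end Analytic

attribute [local instance] LieRing.ofAssociativeRing

set_option maxHeartbeats 1000000 in
open MvPolynomial in
/-- If `ρ : sl_{n+1}(K) → End_K(K[x_1,…,x_n])` is a Lie algebra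
homomorphism with `ρ(e_{i,n+1})` equal to multiplication by `x_i`, then, setting
`p_{ij} := ρ(e_{ij})(1)`, `p_{ii} := ρ(h_i)(1)` and `q_i := ρ(e_{n+1,i})(1)`, the
whole action is given by the explicit formulas of Lemma 4.4; in particular the
module structure is uniquely determined by the polynomials `p_{ij}` and `q_i`. -/
theorem stmt12 (K : Type*) [Field K] [IsAlgClosed K] [CharZero K]
    (n : ℕ) (hn : 1 ≤ n)
    (ρ : sl (Fin (n + 1)) K →ₗ⁅K⁆ Module.End K (MvPolynomial (Fin n) K))
    (hx : ∀ (i : Fin n) (f : MvPolynomial (Fin n) K), ρ (xg i) f = X i * f)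
    (f : MvPolynomial (Fin n) K) :
    (∀ i : Fin n, ρ (hE i) f = (ρ (hE i) 1) * f + X i * pderiv i f) ∧
    (∀ (i j : Fin n) (hij : i ≠ j),
      ρ (eg i j hij) f = (ρ (eg i j hij) 1) * f + X i * pderiv j f) ∧
    (∀ i : Fin n,
      ρ (fg i) f = (ρ (fg i) 1) * f
        - ∑ r : Fin n,
            ((if h : r = i then ρ (hE i) 1 else ρ (eg r i h) 1) * pderiv r f
              + (ρ (hE r) 1) * pderiv i f
              + X r * pderiv i (pderiv r f))) := by
  classical
  have key : ∀ (g : sl (Fin (n + 1)) K) (j : Fin n) (p : MvPolynomial (Fin n) K),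
      ρ g (X j * p) = X j * ρ g p + ρ ⁅g, xg j⁆ p := by
    intro g j p
    have h1 : ρ ⁅g, xg j⁆ p = ρ g (ρ (xg j) p) - ρ (xg j) (ρ g p) := by
      rw [LieHom.map_lie]; rfl
    rw [h1, hx, hx]; ring
  have hCs : ∀ a : K, (C a : MvPolynomial (Fin n) K) = a • 1 := fun a => by
    rw [smul_eq_C_mul, mul_one]
  -- the h_i formula
  have Hh : ∀ (i : Fin n) (g : MvPolynomial (Fin n) K),
      ρ (hE i) g = ρ (hE i) 1 * g + X i * pderiv i g := by
    intro i g
    induction g using MvPolynomial.induction_on with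
    | C a => rw [hCs a, LinearMap.map_smul]; simp [mul_smul_comm, pderiv_one]
    | add p q hp hq => simp only [map_add]; rw [hp, hq]; ring
    | mul_X p j hp =>
      rw [mul_comm, key (hE i) j p, br1, hp, hder i j p]
      by_cases h : i = j
      · subst h
        rw [if_pos rfl, if_pos rfl, hx]
        ring
      · rw [if_neg h, if_neg h, map_zero ρ]
        simp only [LinearMap.zero_apply]
        ring
  -- the e_{ij} formula
  have He : ∀ (i j : Fin n) (hij : i ≠ j) (g : MvPolynomial (Fin n) K),
      ρ (eg i j hij) g = ρ (eg i j hij) 1 * g + X i * pderiv j g := by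
    intro i j hij g
    induction g using MvPolynomial.induction_on with
    | C a => rw [hCs a, LinearMap.map_smul]; simp [mul_smul_comm, pderiv_one]
    | add p q hp hq => simp only [map_add]; rw [hp, hq]; ring
    | mul_X p k hp =>
      rw [mul_comm, key (eg i j hij) k p, br2, hp, hder j k p]
      by_cases h : j = k
      · subst h
        rw [if_pos rfl, if_pos rfl, hx]
        ring
      · rw [if_neg h, if_neg h, map_zero ρ]
        simp only [LinearMap.zero_apply]
        ring
  -- the f_i formula
  have Hf : ∀ (i : Fin n) (g : MvPolynomial (Fin n) K),
      ρ (fg i) g = ρ (fg i) 1 * g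
        - ∑ r : Fin n,
            ((if h : r = i then ρ (hE i) 1 else ρ (eg r i h) 1) * pderiv r g
              + (ρ (hE r) 1) * pderiv i g
              + X r * pderiv i (pderiv r g)) := by
    intro i g
    induction g using MvPolynomial.induction_on with
    | C a =>
      rw [hCs a, LinearMap.map_smul]
      simp [mul_smul_comm, pderiv_one]
    | add p q hp hq =>
      have hb : ∀ r : Fin n,
          (if h : r = i then ρ (hE i) 1 else ρ (eg r i h) 1) * pderiv r (p + q)
            + (ρ (hE r) 1) * pderiv i (p + q) + X r * pderiv i (pderiv r (p + q))
          = ((if h : r = i then ρ (hE i) 1 else ρ (eg r i h) 1) * pderiv r p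
              + (ρ (hE r) 1) * pderiv i p + X r * pderiv i (pderiv r p))
            + ((if h : r = i then ρ (hE i) 1 else ρ (eg r i h) 1) * pderiv r q
              + (ρ (hE r) 1) * pderiv i q + X r * pderiv i (pderiv r q)) := by
        intro r
        simp only [map_add]
        ring
      rw [Finset.sum_congr rfl (fun r _ => hb r), Finset.sum_add_distrib]
      simp only [map_add]
      rw [hp, hq]
      ring
    | mul_X p j hp =>
      rw [mul_comm, key (fg i) j p, hp,
        sumS i j (fun r => if h : r = i then ρ (hE i) 1 else ρ (eg r i h) 1)
          (fun r => ρ (hE r) 1) p]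
      by_cases h : i = j
      · subst h
        rw [br3a, if_pos rfl, dif_pos rfl]
        have hbar1 : ρ (hbar K n) p
            = (∑ r : Fin n, ρ (hE r) 1 * p) + ∑ r : Fin n, X r * pderiv r p := by
          have h0 : ρ (hbar K n) = ∑ r : Fin n, ρ (hE r) :=
            map_sum ρ.toLinearMap (fun r : Fin n => hE (K := K) r) Finset.univ
          rw [h0, LinearMap.sum_apply, ← Finset.sum_add_distrib]
          exact Finset.sum_congr rfl fun r _ => Hh r p
        have hneg : ρ (-(hbar K n + hE i)) p = -(ρ (hbar K n) p + ρ (hE i) p) := by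
          rw [map_neg ρ, map_add ρ]; rfl
        rw [hneg, hbar1, Hh i p]
        ring
      · rw [br3b i j h, if_neg h, dif_neg (Ne.symm h)]
        have hneg : ρ (-(eg j i (Ne.symm h))) p = -(ρ (eg j i (Ne.symm h)) p) := by
          rw [map_neg ρ]; rfl
        rw [hneg, He j i (Ne.symm h) p]
        ring
  exact ⟨fun i => Hh i f, fun i j hij => He i j hij f, fun i => Hf i f⟩
end

section
/- Let p, p̃ ∈ K[x_1,…,x_n]. If φ : K[x_1,…,x_n] → K[x_1,…,x_n] is a K-linear bijection intertwining the M(p)-action with the M(p̃)-action (that is, φ∘ρ_p(z) = ρ_{p̃}(z)∘φ for all z ∈ sl_{n+1}(K)), then p = p̃. Consequently M(p) ≅ M(p̃) as sl_{n+1}(K)-modules if and only if p = p̃. -/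
open LieAlgebra.SpecialLinear Matrix

/-- The polynomial `p_{ij} := x_i·∂p/∂x_j + δ_{ij}·p(0)/n`. -/
noncomputable def pcoef {K : Type*} [Field K] {n : ℕ} (p : MvPolynomial (Fin n) K)
    (i j : Fin n) : MvPolynomial (Fin n) K :=
  MvPolynomial.X i * MvPolynomial.pderiv j p
    + if i = j then MvPolynomial.C (MvPolynomial.coeff 0 p / (n : K)) else 0

section Helpers
open MvPolynomial Finsupp

lemma coeff_X_mul_pderiv {K : Type*} [CommRing K] {n : ℕ} (i : Fin n)
    (g : MvPolynomial (Fin n) K) (d : Fin n →₀ ℕ) :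
    coeff d (X i * pderiv i g) = (d i : K) * coeff d g := by
  induction g using MvPolynomial.induction_on' with
  | add f g hf hg => simp [mul_add, hf, hg]
  | monomial s a =>
    rw [pderiv_monomial, coeff_X_mul', coeff_monomial, coeff_monomial]
    by_cases hd : s = d
    · subst hd
      by_cases hsi : s i = 0
      · simp [hsi, Finsupp.mem_support_iff]
      · have hmem : i ∈ s.support := Finsupp.mem_support_iff.2 hsi
        simp [hmem, mul_comm]
    · rw [if_neg hd]
      by_cases hmem : i ∈ d.support
      · rw [if_pos hmem]
        by_cases h2 : s - Finsupp.single i 1 = d - Finsupp.single i 1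
        · rw [if_pos h2]
          have hdi : d i ≠ 0 := Finsupp.mem_support_iff.1 hmem
          have hcoord : ∀ j, s j - Finsupp.single i 1 j = d j - Finsupp.single i 1 j :=
            fun j => DFunLike.congr_fun h2 j
          by_cases hsi0 : s i = 0
          · simp [hsi0]
          · exfalso; apply hd; ext j
            have := hcoord j
            by_cases hji : j = i
            · subst hji
              simp [Finsupp.single_apply] at this
              omega
            · simpa [Finsupp.single_apply, Ne.symm hji, hji] using this
        · rw [if_neg h2, mul_zero]
      · rw [if_neg hmem, mul_zero]

lemma T_inj {K : Type*} [Field K] [CharZero K] {n : ℕ} (i : Fin n)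
    {g g' : MvPolynomial (Fin n) K}
    (h : X i * pderiv i g + g = X i * pderiv i g' + g') : g = g' := by
  ext d
  have h0 := congrArg (coeff d) h
  rw [coeff_add, coeff_add, coeff_X_mul_pderiv, coeff_X_mul_pderiv] at h0
  have h2 : ((d i : K) + 1) * coeff d g = ((d i : K) + 1) * coeff d g' := by
    linear_combination h0
  have h3 : ((d i : K) + 1) ≠ 0 := by
    have := Nat.cast_add_one_ne_zero (R := K) (d i); push_cast at this ⊢; exact this
  exact mul_left_cancel₀ h3 h2

lemma pderiv_zero_eq {K : Type*} [Field K] [CharZero K] {n : ℕ}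
    {g : MvPolynomial (Fin n) K} (h0 : coeff 0 g = 0)
    (hd : ∀ i : Fin n, pderiv i g = 0) : g = 0 := by
  ext d
  rw [coeff_zero]
  by_cases hdz : d = 0
  · subst hdz; exact h0
  · have : ∃ i, d i ≠ 0 := by
      by_contra hc
      push_neg at hc
      exact hdz (Finsupp.ext fun j => hc j)
    obtain ⟨i, hi⟩ := this
    have := coeff_X_mul_pderiv i g d
    rw [hd i, mul_zero, coeff_zero] at this
    have hcast : (d i : K) ≠ 0 := Nat.cast_ne_zero.2 hi
    exact (mul_eq_zero.1 this.symm).resolve_left hcast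

lemma mv_unit_eq_C {K : Type*} [Field K] : ∀ {n : ℕ} (c : MvPolynomial (Fin n) K),
    IsUnit c → ∃ a : K, c = C a := by
  intro n
  induction n with
  | zero =>
    intro c _
    exact ⟨(isEmptyAlgEquiv K (Fin 0)) c,
      ((isEmptyAlgEquiv K (Fin 0)).symm_apply_apply c).symm.trans rfl⟩
  | succ n ih =>
    intro c hc
    have h2 : IsUnit (finSuccEquiv K n c) := hc.map _
    obtain ⟨r, hr, hCr⟩ := Polynomial.isUnit_iff.1 h2
    obtain ⟨a, ha⟩ := ih r hr
    have hc' : c = (finSuccEquiv K n).symm (Polynomial.C (C a)) := by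
      rw [← ha, hCr]
      exact ((finSuccEquiv K n).symm_apply_apply c).symm
    rw [hc']
    exact ⟨a, RingHom.congr_fun (finSuccEquiv_comp_C_eq_C n) a⟩

end Helpers

section Decomp
open LieAlgebra.SpecialLinear Matrix

lemma sl_val_smul {K : Type*} [Field K] {m : ℕ} (c : K) (A : sl (Fin m) K) :
    ((c • A : sl (Fin m) K) : Matrix (Fin m) (Fin m) K)
      = c • (A : Matrix (Fin m) (Fin m) K) := rfl

lemma sl_decomp {K : Type*} [Field K] [CharZero K] {n : ℕ} (A : sl (Fin (n+1)) K) :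
    A = (∑ i : Fin n, (A.val i.castSucc i.castSucc - A.val (Fin.last n) (Fin.last n)) • hE i)
      + (∑ i : Fin n, ∑ j : Fin n,
          if h : i = j then 0 else A.val i.castSucc j.castSucc • eg i j h)
      + (∑ i : Fin n, A.val i.castSucc (Fin.last n) • xg i)
      + (∑ i : Fin n, A.val (Fin.last n) i.castSucc • fg i) := by
  have htr : ∑ i : Fin n, A.val i.castSucc i.castSucc + A.val (Fin.last n) (Fin.last n) = 0 := by
    have h : (Matrix.trace A.val) = 0 := A.2
    rw [Matrix.trace] at h
    rwa [Fin.sum_univ_castSucc] at h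
  have hne : ∀ c : Fin n, c.castSucc ≠ Fin.last n := fun c => (Fin.castSucc_lt_last c).ne
  have hne' : ∀ c : Fin n, Fin.last n ≠ c.castSucc := fun c => (Fin.castSucc_lt_last c).ne'
  apply Subtype.ext
  push_cast [AddSubmonoidClass.coe_finset_sum]
  ext a b
  simp only [sl_val_smul, apply_dite (Subtype.val), ZeroMemClass.coe_zero,
    hE, eg, xg, fg, eE, val_single, Matrix.add_apply, Matrix.sum_apply, Matrix.smul_apply,
    Matrix.sub_apply, Matrix.one_apply, smul_eq_mul, Matrix.single, Matrix.of_apply,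
    apply_dite (fun M : Matrix (Fin (n+1)) (Fin (n+1)) K => M a b), Matrix.zero_apply]
  induction b using Fin.lastCases with
  | last =>
    induction a using Fin.lastCases with
    | last =>
      simp only [hne, hne', and_false, false_and, if_false, if_pos rfl, and_true, if_true,
        Fin.castSucc_inj, mul_zero, Finset.sum_const_zero, add_zero, zero_add, mul_one,
        Finset.sum_ite_eq, Finset.sum_ite_eq', Finset.mem_univ, dite_eq_ite, sub_zero, zero_sub]
      have hsum : ∑ x : Fin n, A.val x.castSucc x.castSucc
          = - A.val (Fin.last n) (Fin.last n) := eq_neg_of_add_eq_zero_left htr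
      have hn1 : (n : K) + 1 ≠ 0 := by
        have := Nat.cast_add_one_ne_zero (R := K) n; push_cast at this ⊢; exact this
      rw [← Finset.sum_mul, Finset.sum_sub_distrib, Finset.sum_const, Finset.card_univ,
        Fintype.card_fin, hsum, nsmul_eq_mul]
      field_simp
      ring
    | cast i =>
      simp only [hne, hne', and_false, false_and, if_false, if_pos rfl, and_true, if_true,
        Fin.castSucc_inj, mul_zero, Finset.sum_const_zero, add_zero, zero_add, mul_one,
        Finset.sum_ite_eq, Finset.sum_ite_eq', Finset.mem_univ, dite_eq_ite, sub_zero, zero_sub]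
      simp [mul_ite, Finset.sum_ite_eq', mul_one, mul_zero]
  | cast j =>
    induction a using Fin.lastCases with
    | last =>
      simp only [hne, hne', and_false, false_and, if_false, if_pos rfl, and_true, if_true,
        Fin.castSucc_inj, mul_zero, Finset.sum_const_zero, add_zero, zero_add, mul_one,
        Finset.sum_ite_eq, Finset.sum_ite_eq', Finset.mem_univ, dite_eq_ite, sub_zero, zero_sub]
      simp [mul_ite, Finset.sum_ite_eq', mul_one, mul_zero]
    | cast i =>
      simp only [hne, hne', and_false, false_and, if_false, if_pos rfl, and_true, if_true,
        Fin.castSucc_inj, mul_zero, Finset.sum_const_zero, add_zero, zero_add, mul_one,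
        Finset.sum_ite_eq, Finset.sum_ite_eq', Finset.mem_univ, dite_eq_ite, sub_zero, zero_sub]
      by_cases hij : i = j
      · subst hij
        have hsum : ∑ x : Fin n, A.val x.castSucc x.castSucc
            = - A.val (Fin.last n) (Fin.last n) := eq_neg_of_add_eq_zero_left htr
        have hn1 : (n : K) + 1 ≠ 0 := by
          have := Nat.cast_add_one_ne_zero (R := K) n; push_cast at this ⊢; exact this
        have h2 : (∑ x : Fin n, ∑ x_1 : Fin n, if x = x_1 then 0
            else A.val x.castSucc x_1.castSucc * if x = i ∧ x_1 = i then 1 else 0) = 0 := by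
          apply Finset.sum_eq_zero; intro x _
          apply Finset.sum_eq_zero; intro y _
          by_cases hxy : x = y
          · simp [hxy]
          · simp only [if_neg hxy]
            have : ¬ (x = i ∧ y = i) := by rintro ⟨rfl, rfl⟩; exact hxy rfl
            simp [this]
        rw [h2, add_zero]
        simp only [and_self, if_pos rfl, mul_sub]
        rw [Finset.sum_sub_distrib, ← Finset.sum_mul, Finset.sum_sub_distrib,
          Finset.sum_const, Finset.card_univ, Fintype.card_fin, hsum, nsmul_eq_mul]
        simp only [mul_ite, mul_one, mul_zero, Finset.sum_ite_eq', Finset.mem_univ, if_pos]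
        field_simp
        ring
      · have h1 : (∑ x : Fin n,
            (A.val x.castSucc x.castSucc - A.val (Fin.last n) (Fin.last n)) *
              ((if x = i ∧ x = j then 1 else 0)
                - ((n : K) + 1)⁻¹ * if i = j then 1 else 0)) = 0 := by
          apply Finset.sum_eq_zero; intro x _
          have : ¬ (x = i ∧ x = j) := by rintro ⟨rfl, rfl⟩; exact hij rfl
          simp [this, hij]
        rw [h1, zero_add]
        rw [Finset.sum_eq_single i ?_ (by simp)]
        · rw [Finset.sum_eq_single j ?_ (by simp)]
          · simp [hij]
          · intro b _ hb
            simp [hb]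
        · intro a _ ha
          apply Finset.sum_eq_zero; intro b _
          have : ¬ (a = i ∧ b = j) := by rintro ⟨rfl, -⟩; exact ha rfl
          simp [this]

end Decomp
attribute [local instance 100] LieRing.ofAssociativeRing

open MvPolynomial in
/-- There is a `K`-linear bijection of `K[x_1,…,x_n]` intertwining
the `M(p)`-action `ρ_p` with the `M(p̃)`-action `ρ_{p̃}` (i.e. `M(p) ≅ M(p̃)` as
`sl_{n+1}(K)`-modules) if and only if `p = p̃`. -/
theorem stmt16 (K : Type*) [Field K] [IsAlgClosed K] [CharZero K]
    (n : ℕ) (hn : 1 ≤ n) (p pt : MvPolynomial (Fin n) K)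
    (q qt : Fin n → MvPolynomial (Fin n) K)
    (hq : ∀ i : Fin n,
      X i * pderiv i (q i) + q i
        + ∑ r : Fin n,
            (pderiv r (pcoef p i i) * pcoef p r i
              + X r * pderiv i (pderiv r (pcoef p i i))
              + pderiv i (pcoef p i i) * pcoef p r r) = 0)
    (hqt : ∀ i : Fin n,
      X i * pderiv i (qt i) + qt i
        + ∑ r : Fin n,
            (pderiv r (pcoef pt i i) * pcoef pt r i
              + X r * pderiv i (pderiv r (pcoef pt i i))
              + pderiv i (pcoef pt i i) * pcoef pt r r) = 0)
    (ρp ρpt : sl (Fin (n + 1)) K →ₗ⁅K⁆ Module.End K (MvPolynomial (Fin n) K))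
    (hxp : ∀ (i : Fin n) (f : MvPolynomial (Fin n) K), ρp (xg i) f = X i * f)
    (hhp : ∀ (i : Fin n) (f : MvPolynomial (Fin n) K),
      ρp (hE i) f = pcoef p i i * f + X i * pderiv i f)
    (hep : ∀ (i j : Fin n) (hij : i ≠ j) (f : MvPolynomial (Fin n) K),
      ρp (eg i j hij) f = pcoef p i j * f + X i * pderiv j f)
    (hfp : ∀ (i : Fin n) (f : MvPolynomial (Fin n) K),
      ρp (fg i) f = q i * f
        - ∑ r : Fin n,
            (pcoef p r i * pderiv r f + pcoef p r r * pderiv i f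
              + X r * pderiv i (pderiv r f)))
    (hxpt : ∀ (i : Fin n) (f : MvPolynomial (Fin n) K), ρpt (xg i) f = X i * f)
    (hhpt : ∀ (i : Fin n) (f : MvPolynomial (Fin n) K),
      ρpt (hE i) f = pcoef pt i i * f + X i * pderiv i f)
    (hept : ∀ (i j : Fin n) (hij : i ≠ j) (f : MvPolynomial (Fin n) K),
      ρpt (eg i j hij) f = pcoef pt i j * f + X i * pderiv j f)
    (hfpt : ∀ (i : Fin n) (f : MvPolynomial (Fin n) K),
      ρpt (fg i) f = qt i * f
        - ∑ r : Fin n,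
            (pcoef pt r i * pderiv r f + pcoef pt r r * pderiv i f
              + X r * pderiv i (pderiv r f))) :
    (∃ φ : MvPolynomial (Fin n) K ≃ₗ[K] MvPolynomial (Fin n) K,
      ∀ (z : sl (Fin (n + 1)) K) (f : MvPolynomial (Fin n) K),
        φ (ρp z f) = ρpt z (φ f)) ↔ p = pt := by
  constructor
  · rintro ⟨φ, hφ⟩
    -- φ commutes with multiplication by X i
    have hx : ∀ (i : Fin n) (f : MvPolynomial (Fin n) K), φ (X i * f) = X i * φ f := by
      intro i f
      have h := hφ (xg i) f
      rwa [hxp, hxpt] at h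
    -- φ f = f * φ 1
    have hmul : ∀ f : MvPolynomial (Fin n) K, φ f = f * φ 1 := by
      intro f
      induction f using MvPolynomial.induction_on with
      | C a =>
        rw [show (C a : MvPolynomial (Fin n) K) = a • 1 by rw [smul_eq_C_mul, mul_one],
          _root_.map_smul, smul_eq_C_mul, smul_eq_C_mul]
        ring
      | add f g hf hg => rw [map_add, hf, hg, add_mul]
      | mul_X f i hf =>
        rw [mul_comm f (X i), hx, hf]
        ring
    -- φ 1 is a nonzero constant
    obtain ⟨g, hg⟩ := φ.surjective 1
    have hg1 : g * φ 1 = 1 := by rw [← hmul g, hg]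
    have hunit : IsUnit (φ 1) := IsUnit.of_mul_eq_one g (by rw [mul_comm, hg1])
    obtain ⟨a, ha⟩ := mv_unit_eq_C _ hunit
    have hCa : (C a : MvPolynomial (Fin n) K) ≠ 0 := by
      rw [← ha]; exact hunit.ne_zero
    -- diagonal coefficients agree
    have hdiag : ∀ i : Fin n, pcoef p i i = pcoef pt i i := by
      intro i
      have h := hφ (hE i) 1
      rw [hhp, hhpt] at h
      simp only [pderiv_one, mul_one, mul_zero, add_zero] at h
      rw [hmul (pcoef p i i), ha, pderiv_C, mul_zero, add_zero] at h
      exact mul_right_cancel₀ hCa h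
    -- deduce p = pt
    have hn0 : (n : K) ≠ 0 := Nat.cast_ne_zero.2 (by omega)
    have hconst : coeff 0 p = coeff 0 pt := by
      have h := hdiag ⟨0, hn⟩
      unfold pcoef at h
      rw [if_pos rfl, if_pos rfl] at h
      have h2 := congrArg constantCoeff h
      simp only [map_add, _root_.map_mul, constantCoeff_X, zero_mul, zero_add, constantCoeff_C] at h2
      field_simp at h2
      exact h2
    have hpd : ∀ i : Fin n, pderiv i p = pderiv i pt := by
      intro i
      have h := hdiag i
      unfold pcoef at h
      rw [if_pos rfl, if_pos rfl, hconst] at h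
      have h2 : X i * pderiv i p = X i * pderiv i pt := by
        exact add_right_cancel h
      exact mul_left_cancel₀ (MvPolynomial.X_ne_zero i) h2
    have : p - pt = 0 := by
      apply pderiv_zero_eq
      · rw [coeff_sub, hconst, sub_self]
      · intro i
        rw [map_sub, hpd, sub_self]
    exact sub_eq_zero.1 this
  · intro hpt
    subst hpt
    have hqeq : ∀ i : Fin n, q i = qt i := by
      intro i
      apply T_inj i
      linear_combination hq i - hqt i
    have e1 : ∀ i : Fin n, ρp (hE i) = ρpt (hE i) := fun i =>
      LinearMap.ext fun f => by rw [hhp, hhpt]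
    have e2 : ∀ (i j : Fin n) (h : i ≠ j), ρp (eg i j h) = ρpt (eg i j h) := fun i j h =>
      LinearMap.ext fun f => by rw [hep _ _ h, hept _ _ h]
    have e3 : ∀ i : Fin n, ρp (xg i) = ρpt (xg i) := fun i =>
      LinearMap.ext fun f => by rw [hxp, hxpt]
    have e4 : ∀ i : Fin n, ρp (fg i) = ρpt (fg i) := fun i =>
      LinearMap.ext fun f => by rw [hfp, hfpt, hqeq]
    have hAll : ∀ z : sl (Fin (n + 1)) K, ρp z = ρpt z := by
      intro z
      rw [sl_decomp z]
      simp only [← LieHom.coe_toLinearMap]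
      simp only [map_add, map_sum, _root_.map_smul, map_zero,
        apply_dite (DFunLike.coe ρp.toLinearMap), apply_dite (DFunLike.coe ρpt.toLinearMap)]
      simp only [LieHom.coe_toLinearMap]
      simp only [e1, e3, e4]
      congr 3
      apply Finset.sum_congr rfl
      intro i _
      apply Finset.sum_congr rfl
      intro j _
      by_cases h : i = j
      · simp [h]
      · simp [h, e2 i j h]
    exact ⟨LinearEquiv.refl K _, fun z f => by rw [LinearEquiv.refl_apply, LinearEquiv.refl_apply, hAll z]⟩
end
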